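/- With the protocol and function f from the previous context: a 1a transition (1a→3b) applied to a configuration C with c = 0 preserves f exactly, i.e., f(C') = f(C), and in general f(C') ≤ f(C) with equality if and only if c = 0. -/

import Mathlib

/-- A configuration of the doubling protocol on states `{1,2,3,4,a,b,c,d}`,
recorded as counts of agents in each state. -/
structure Conf where
  n1 : ℕ
  n2 : ℕ
  n3 : ℕ
  n4 : ℕ
  a : ℕ
  b : ℕ
  c : ℕ
  d : ℕ

/-- One step of the protocol with transitions
`1c→2d, 2b→1d, 1a→3b, 3d→4c, 4b→3c, 3a→1b` (all other interactions are no-ops,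
which do not change the count vector). -/
def DStep (C C' : Conf) : Prop :=
  (1 ≤ C.n1 ∧ 1 ≤ C.c ∧ C' = ⟨C.n1 - 1, C.n2 + 1, C.n3, C.n4, C.a, C.b, C.c - 1, C.d + 1⟩) ∨
  (1 ≤ C.n2 ∧ 1 ≤ C.b ∧ C' = ⟨C.n1 + 1, C.n2 - 1, C.n3, C.n4, C.a, C.b - 1, C.c, C.d + 1⟩) ∨
  (1 ≤ C.n1 ∧ 1 ≤ C.a ∧ C' = ⟨C.n1 - 1, C.n2, C.n3 + 1, C.n4, C.a - 1, C.b + 1, C.c, C.d⟩) ∨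
  (1 ≤ C.n3 ∧ 1 ≤ C.d ∧ C' = ⟨C.n1, C.n2, C.n3 - 1, C.n4 + 1, C.a, C.b, C.c + 1, C.d - 1⟩) ∨
  (1 ≤ C.n4 ∧ 1 ≤ C.b ∧ C' = ⟨C.n1, C.n2, C.n3 + 1, C.n4 - 1, C.a, C.b - 1, C.c + 1, C.d⟩) ∨
  (1 ≤ C.n3 ∧ 1 ≤ C.a ∧ C' = ⟨C.n1 + 1, C.n2, C.n3 - 1, C.n4, C.a - 1, C.b + 1, C.c, C.d⟩)

/-- `C` has exactly one agent in a numbered state. -/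
def OneNumbered (C : Conf) : Prop :=
  C.n1 + C.n2 + C.n3 + C.n4 = 1

/-- The potential function `f` (meaningful when `C` has exactly one numbered agent). -/
def fPot (C : Conf) : ℕ :=
  if C.n1 = 1 then 2 ^ C.a * (2 * C.c + C.d)
  else if C.n2 = 1 then 2 ^ C.a * (2 * C.c + C.d + 1)
  else if C.n3 = 1 then 2 ^ C.a * (2 * C.d + C.c)
  else 2 ^ C.a * (2 * C.d + C.c + 1)

theorem DStep.oneNumbered {C C' : Conf} (h : DStep C C') (hC : OneNumbered C) :
    OneNumbered C' := by
  unfold OneNumbered at hC ⊢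
  rcases h with ⟨_, _, rfl⟩ | ⟨_, _, rfl⟩ | ⟨_, _, rfl⟩ | ⟨_, _, rfl⟩ | ⟨_, _, rfl⟩ | ⟨_, _, rfl⟩ <;>
    dsimp only <;> omega

theorem fPot_of_n1_eq_one {C : Conf} (h1 : C.n1 = 1) : fPot C = 2 ^ C.a * (2 * C.c + C.d) := by
  simp [fPot, h1]

theorem OneNumbered.fPot_of_n3_eq_one {C : Conf} (hC : OneNumbered C) (h3 : C.n3 = 1) :
    fPot C = 2 ^ C.a * (2 * C.d + C.c) := by
  unfold OneNumbered at hC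
  have h1 : C.n1 ≠ 1 := by omega
  have h2 : C.n2 ≠ 1 := by omega
  simp [fPot, h1, h2, h3]

theorem two_pow_succ_mul_eq (k c d : ℕ) :
    2 ^ (k + 1) * (2 * c + d) = 2 ^ k * (2 * d + c) + 3 * 2 ^ k * c := by
  ring

/-- A `1a→3b` transition does not increase `f`, with equality iff `c = 0`. -/
theorem fPot_1a (C C' : Conf) (h1 : OneNumbered C)
    (hstep : 1 ≤ C.n1 ∧ 1 ≤ C.a ∧
      C' = ⟨C.n1 - 1, C.n2, C.n3 + 1, C.n4, C.a - 1, C.b + 1, C.c, C.d⟩) :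
    fPot C' ≤ fPot C ∧ (fPot C' = fPot C ↔ C.c = 0) := by
  have h1' : OneNumbered C' := DStep.oneNumbered (Or.inr <| Or.inr <| Or.inl hstep) h1
  obtain ⟨hpos, ha, rfl⟩ := hstep
  obtain ⟨hn1, hn3⟩ : C.n1 = 1 ∧ C.n3 = 0 := by unfold OneNumbered at h1; omega
  obtain ⟨k, hk⟩ : ∃ k, C.a = k + 1 := ⟨C.a - 1, by omega⟩
  rw [fPot_of_n1_eq_one hn1, h1'.fPot_of_n3_eq_one (by simp [hn3])]
  dsimp only
  rw [hk, Nat.add_sub_cancel, two_pow_succ_mul_eq]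
  refine ⟨Nat.le_add_right _ _, ?_⟩
  simp
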